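/- Let G be a finite bipartite simple graph with bipartition (A, B), and let M[G] be its fundamental transversal matroid. Let λ be a positive integer and let (U, V) be a partition of A ∪ B with λ_{M[G]}(U) ≤ λ. Then the equivalence relation ∼_U on the subsets of U has at most 2^{2^{2^λ}} + 1 equivalence classes. (Hence the class of fundamental transversal matroids is strongly pigeonhole.) -/

import Mathlib

open Set

noncomputable def mrank {α : Type*} (M : Matroid α) (X : Set α) : ℕ :=
  sSup {n | ∃ I, I ⊆ X ∧ M.Indep I ∧ I.ncard = n}

noncomputable def connVal {α : Type*} (M : Matroid α) (U : Set α) : ℕ :=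
  mrank M U + mrank M (M.E \ U) - mrank M M.E

def Sim {α : Type*} (M : Matroid α) (U X X' : Set α) : Prop :=
  ∀ Z ⊆ M.E \ U, (M.Indep (X ∪ Z) ↔ M.Indep (X' ∪ Z))

def SimClassesLE {α : Type*} (M : Matroid α) (U : Set α) (k : ℕ) : Prop :=
  ∃ f : Set α → Fin k, ∀ X X' : Set α, X ⊆ U → X' ⊆ U → f X = f X' → Sim M U X X'

structure Decomp {α : Type*} (M : Matroid α) where
  V : Type
  fin : Finite V
  T : SimpleGraph V
  conn : T.Connected
  acyc : T.IsAcyclic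
  deg : ∀ v : V, (T.neighborSet v).ncard = 1 ∨ (T.neighborSet v).ncard = 3
  leafEquiv : M.E ≃ {v : V // (T.neighborSet v).ncard = 1}

def Decomp.Displays {α : Type*} {M : Matroid α} (D : Decomp M) (U : Set α) : Prop :=
  ∃ u v : D.V, D.T.Adj u v ∧
    U = {x | ∃ h : x ∈ M.E, (D.T.deleteEdges {s(u, v)}).Reachable (D.leafEquiv ⟨x, h⟩).1 u}

def bwLE {α : Type*} (M : Matroid α) (k : ℕ) : Prop :=
  ∃ D : Decomp M, ∀ U, D.Displays U → connVal M U + 1 ≤ k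

def dwLE {α : Type*} (M : Matroid α) (k : ℕ) : Prop :=
  ∃ D : Decomp M, ∀ U, D.Displays U → SimClassesLE M U k

def Pigeonhole {α : Type*} (C : Set (Matroid α)) : Prop :=
  ∀ l : ℕ, 0 < l → ∃ ρ : ℕ, ∀ M ∈ C, bwLE M l → dwLE M ρ

/-- A matching of a graph: a set of edges, pairwise sharing no vertex. -/
def IsGraphMatching {α : Type*} (G : SimpleGraph α) (m : Set (Sym2 α)) : Prop :=
  m ⊆ G.edgeSet ∧ m.Pairwise fun e f => ∀ x, x ∈ e → x ∉ f

/-- A matching \`m\` certifies the independence of \`X\` in the fundamental transversal matroid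
of the bipartite graph \`G\` with bipartition \`(A, B)\`: \`|m| = |X ∩ A|\` and every edge of
\`m\` joins a vertex of \`X ∩ A\` to a vertex of \`B \ X\`. -/
def CertifiesIndep {α : Type*} (G : SimpleGraph α) (A B X : Set α) (m : Set (Sym2 α)) : Prop :=
  IsGraphMatching G m ∧ m.Finite ∧ m.ncard = (X ∩ A).ncard ∧
    ∀ e ∈ m, ∃ a b, a ∈ X ∩ A ∧ b ∈ B \ X ∧ e = s(a, b)

/-!
Let `N₁` be a maximum matching from `A ∩ U` to `B ∩ V` and `N₂` one from `A ∩ V` to `B ∩ U`.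
Their vertex set `C` meets every edge between `U` and `V`. Since `(B ∩ U) ∪ (A-ends of N₁)` is
independent, `r(U) ≥ |B ∩ U| + |N₁|`; likewise for `V`, and `r(E) ≤ |B|`, so
`|N₁| + |N₂| ≤ λ(U)` and `|C| ≤ 2λ ≤ 2 ^ λ`.

For `X ⊆ U` and `Z ⊆ V`, a certificate for `X ∪ Z` splits into a `U`-half and a `V`-half that
only share the interface `W ⊆ C` (one `C`-end of each edge between `U` and `V`), and two halves
with the same interface glue back to a certificate. So the `∼_U`-class of `X` is determined by
the set of interfaces `W ⊆ C` admitting a `U`-half for `X`: at most `2 ^ 2 ^ |C|` classes.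
-/

section

variable {α : Type*}

section Matching

def verts (m : Set (Sym2 α)) : Set α := {x | ∃ e ∈ m, x ∈ e}

def Joins (m : Set (Sym2 α)) (S T : Set α) : Prop :=
  ∀ e ∈ m, ∃ a b, a ∈ S ∧ b ∈ T ∧ e = s(a, b)

structure IsSaturatingMatching (G : SimpleGraph α) (m : Set (Sym2 α)) (S T : Set α) : Prop where
  isGraphMatching : IsGraphMatching G m
  finite : m.Finite
  joins : Joins m S T
  covers : ∀ a ∈ S, ∃ e ∈ m, a ∈ e

variable {G : SimpleGraph α} {m m' m₁ m₂ : Set (Sym2 α)} {S T S' T' S₁ T₁ S₂ T₂ : Set α}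

lemma Joins.symm (h : Joins m S T) : Joins m T S := by
  intro e he
  obtain ⟨a, b, ha, hb, rfl⟩ := h e he
  exact ⟨b, a, hb, ha, Sym2.eq_swap⟩

lemma Joins.mono (h : Joins m S T) (hm : m' ⊆ m) (hS : S ⊆ S') (hT : T ⊆ T') :
    Joins m' S' T' := by
  intro e he
  obtain ⟨a, b, ha, hb, rfl⟩ := h e (hm he)
  exact ⟨a, b, hS ha, hT hb, rfl⟩

lemma Joins.finite (h : Joins m S T) (hS : S.Finite) (hT : T.Finite) : m.Finite := by
  refine ((hS.prod hT).image fun p => s(p.1, p.2)).subset fun e he => ?_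
  obtain ⟨a, b, ha, hb, rfl⟩ := h e he
  exact ⟨(a, b), ⟨ha, hb⟩, rfl⟩

lemma IsGraphMatching.eq_of_mem_of_mem {x : α} {e f : Sym2 α} (hm : IsGraphMatching G m)
    (he : e ∈ m) (hf : f ∈ m) (hxe : x ∈ e) (hxf : x ∈ f) : e = f :=
  by_contra fun hne => hm.2 he hf hne x hxe hxf

lemma eq_of_mem_sym2_of_disjoint (hST : Disjoint S T) {a b x : α} (hb : b ∈ T)
    (hx : x ∈ s(a, b)) (hxS : x ∈ S) : x = a :=
  (Sym2.mem_iff.mp hx).resolve_right (hST.ne_of_mem hxS hb)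

lemma Joins.ncard_eq (h : Joins m S T) (hm : IsGraphMatching G m) (hST : Disjoint S T) :
    m.ncard = {a ∈ S | ∃ e ∈ m, a ∈ e}.ncard := by
  choose f b hf hb hfb using h
  have hmem : ∀ e he, f e he ∈ e := fun e he =>
    (congrArg (f e he ∈ ·) (hfb e he)).mpr (Sym2.mem_mk_left _ _)
  refine Set.ncard_congr f (fun e he => ⟨hf e he, e, he, hmem e he⟩)
    (fun e e' he he' hee' => hm.eq_of_mem_of_mem he he' (hmem e he) (hee' ▸ hmem e' he')) ?_
  rintro x ⟨hxS, e, he, hxe⟩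
  rw [hfb e he] at hxe
  exact ⟨e, he, (eq_of_mem_sym2_of_disjoint hST (hb e he) hxe hxS).symm⟩

lemma Joins.ncard_le (h : Joins m S T) (hm : IsGraphMatching G m) (hST : Disjoint S T)
    (hS : S.Finite) : m.ncard ≤ S.ncard :=
  h.ncard_eq hm hST ▸ Set.ncard_le_ncard (Set.sep_subset _ _) hS

lemma Joins.ncard_eq_iff_covers (h : Joins m S T) (hm : IsGraphMatching G m)
    (hST : Disjoint S T) (hS : S.Finite) :
    m.ncard = S.ncard ↔ ∀ a ∈ S, ∃ e ∈ m, a ∈ e := by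
  rw [h.ncard_eq hm hST]
  constructor
  · intro hcard a ha
    rw [← Set.eq_of_subset_of_ncard_le (Set.sep_subset S _) hcard.ge hS] at ha
    exact ha.2
  · intro hcov
    congr 1
    exact Set.sep_eq_self_iff_mem_true.mpr hcov

lemma Joins.mem_of_mk_mem (h : Joins m S T) {a b : α} (hab : s(a, b) ∈ m) (ha : a ∉ T) :
    a ∈ S ∧ b ∈ T := by
  obtain ⟨a', b', ha', hb', he⟩ := h _ hab
  rcases Sym2.eq_iff.mp he with ⟨rfl, rfl⟩ | ⟨rfl, rfl⟩
  · exact ⟨ha', hb'⟩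
  · exact absurd hb' ha

lemma Joins.verts_subset (h : Joins m S T) : verts m ⊆ S ∪ T := by
  rintro x ⟨e, he, hxe⟩
  obtain ⟨a, b, ha, hb, rfl⟩ := h e he
  rcases Sym2.mem_iff.mp hxe with rfl | rfl
  exacts [Or.inl ha, Or.inr hb]

lemma Joins.ncard_verts_le (h : Joins m S T) (hm : IsGraphMatching G m) (hST : Disjoint S T) :
    (verts m).ncard ≤ 2 * m.ncard := by
  have hverts : verts m = {a ∈ S | ∃ e ∈ m, a ∈ e} ∪ {b ∈ T | ∃ e ∈ m, b ∈ e} := by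
    ext x
    refine ⟨fun hx => (h.verts_subset hx).imp (⟨·, hx⟩) (⟨·, hx⟩), ?_⟩
    rintro (⟨-, hx⟩ | ⟨-, hx⟩) <;> exact hx
  rw [hverts, two_mul]
  nth_rw 1 [h.ncard_eq hm hST]
  rw [h.symm.ncard_eq hm hST.symm]
  exact Set.ncard_union_le _ _

lemma IsGraphMatching.mono (hm : IsGraphMatching G m) (h : m₁ ⊆ m) : IsGraphMatching G m₁ :=
  ⟨h.trans hm.1, hm.2.mono h⟩

lemma IsGraphMatching.right_unique (hm : IsGraphMatching G m) {a b b' : α} (hb : s(a, b) ∈ m)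
    (hb' : s(a, b') ∈ m) : b = b' :=
  Sym2.congr_right.mp (hm.eq_of_mem_of_mem hb hb' (Sym2.mem_mk_left _ _) (Sym2.mem_mk_left _ _))

lemma IsGraphMatching.left_unique (hm : IsGraphMatching G m) {a a' b : α} (ha : s(a, b) ∈ m)
    (ha' : s(a', b) ∈ m) : a = a' :=
  Sym2.congr_left.mp (hm.eq_of_mem_of_mem ha ha' (Sym2.mem_mk_right _ _) (Sym2.mem_mk_right _ _))

lemma IsGraphMatching.insert (hm : IsGraphMatching G m) {a b : α} (hab : G.Adj a b)
    (ha : a ∉ verts m) (hb : b ∉ verts m) : IsGraphMatching G (insert s(a, b) m) := by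
  refine ⟨Set.insert_subset hab hm.1, Set.pairwise_insert.mpr ⟨hm.2, fun f hf _ => ?_⟩⟩
  have hdisj : ∀ x ∈ s(a, b), x ∉ f := by
    intro x hx hxf
    rcases Sym2.mem_iff.mp hx with rfl | rfl
    exacts [ha ⟨f, hf, hxf⟩, hb ⟨f, hf, hxf⟩]
  exact ⟨hdisj, fun x hxf hx => hdisj x hx hxf⟩

lemma IsGraphMatching.union (h₁ : IsGraphMatching G m₁) (h₂ : IsGraphMatching G m₂)
    (h : Disjoint (verts m₁) (verts m₂)) : IsGraphMatching G (m₁ ∪ m₂) := by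
  refine ⟨Set.union_subset h₁.1 h₂.1, Set.pairwise_union.mpr ⟨h₁.2, h₂.2, ?_⟩⟩
  intro e he f hf _
  exact ⟨fun x hxe hxf => h.ne_of_mem ⟨e, he, hxe⟩ ⟨f, hf, hxf⟩ rfl,
    fun x hxf hxe => h.ne_of_mem ⟨e, he, hxe⟩ ⟨f, hf, hxf⟩ rfl⟩

lemma IsSaturatingMatching.union (h₁ : IsSaturatingMatching G m₁ S₁ T₁)
    (h₂ : IsSaturatingMatching G m₂ S₂ T₂) (h : Disjoint (S₁ ∪ T₁) (S₂ ∪ T₂)) :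
    IsSaturatingMatching G (m₁ ∪ m₂) (S₁ ∪ S₂) (T₁ ∪ T₂) where
  isGraphMatching := h₁.isGraphMatching.union h₂.isGraphMatching <|
    h.mono h₁.joins.verts_subset h₂.joins.verts_subset
  finite := h₁.finite.union h₂.finite
  joins := by
    rintro e (he | he)
    · exact (h₁.joins.mono subset_rfl Set.subset_union_left Set.subset_union_left) e he
    · exact (h₂.joins.mono subset_rfl Set.subset_union_right Set.subset_union_right) e he
  covers := by
    rintro a (ha | ha)
    · obtain ⟨e, he, hae⟩ := h₁.covers a ha
      exact ⟨e, Or.inl he, hae⟩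
    · obtain ⟨e, he, hae⟩ := h₂.covers a ha
      exact ⟨e, Or.inr he, hae⟩

lemma IsSaturatingMatching.mono_right (h : IsSaturatingMatching G m S T) {T' : Set α}
    (hT : T ⊆ T') : IsSaturatingMatching G m S T' :=
  { h with joins := h.joins.mono subset_rfl subset_rfl hT }

lemma IsSaturatingMatching.ncard_eq (h : IsSaturatingMatching G m S T) (hST : Disjoint S T)
    (hS : S.Finite) : m.ncard = S.ncard :=
  (h.joins.ncard_eq_iff_covers h.isGraphMatching hST hS).mpr h.covers

def CoversEdges (G : SimpleGraph α) (S T C : Set α) : Prop :=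
  ∀ a b, G.Adj a b → a ∈ S → b ∈ T → a ∈ C ∨ b ∈ C

lemma CoversEdges.mono {C C' : Set α} (h : CoversEdges G S T C) (hC : C ⊆ C') :
    CoversEdges G S T C' :=
  fun a b hab ha hb => (h a b hab ha hb).imp (@hC a) (@hC b)

structure IsMaximumMatching (G : SimpleGraph α) (N : Set (Sym2 α)) (S T : Set α) : Prop where
  isGraphMatching : IsGraphMatching G N
  joins : Joins N S T
  ncard_le : ∀ N', IsGraphMatching G N' → Joins N' S T → N'.ncard ≤ N.ncard

lemma exists_isMaximumMatching (G : SimpleGraph α) (hST : Disjoint S T) (hS : S.Finite) :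
    ∃ N, IsMaximumMatching G N S T := by
  set sizes := {n | ∃ N, IsGraphMatching G N ∧ Joins N S T ∧ N.ncard = n}
  have hne : sizes.Nonempty :=
    ⟨0, ∅, ⟨Set.empty_subset _, Set.pairwise_empty _⟩, fun _ he => he.elim, Set.ncard_empty _⟩
  have hbdd : BddAbove sizes := by
    refine ⟨S.ncard, ?_⟩
    rintro n ⟨N, hN, hNj, rfl⟩
    exact hNj.ncard_le hN hST hS
  obtain ⟨N, hN, hNj, hcard⟩ := Nat.sSup_mem hne hbdd
  exact ⟨N, ⟨hN, hNj, fun N' hN' hN'j => hcard ▸ le_csSup hbdd ⟨N', hN', hN'j, rfl⟩⟩⟩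

lemma IsMaximumMatching.coversEdges_verts {N : Set (Sym2 α)} (hN : IsMaximumMatching G N S T)
    (hfin : N.Finite) : CoversEdges G S T (verts N) := by
  intro a b hab ha hb
  by_contra! hnot
  have hnew : s(a, b) ∉ N := fun h => hnot.1 ⟨_, h, Sym2.mem_mk_left _ _⟩
  have hjoins : Joins (insert s(a, b) N) S T := by
    rintro e (rfl | he)
    exacts [⟨a, b, ha, hb, rfl⟩, hN.joins e he]
  have := hN.ncard_le _ (hN.isGraphMatching.insert hab hnot.1 hnot.2) hjoins
  rw [Set.ncard_insert_of_notMem hnew hfin] at this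
  omega

end Matching

section Rank

variable {M : Matroid α} {I X : Set α}

lemma le_mrank (hE : M.E.Finite) (hIX : I ⊆ X) (hI : M.Indep I) : I.ncard ≤ mrank M X := by
  refine le_csSup ⟨M.E.ncard, ?_⟩ ⟨I, hIX, hI, rfl⟩
  rintro n ⟨J, -, hJ, rfl⟩
  exact Set.ncard_le_ncard hJ.subset_ground hE

lemma mrank_le {n : ℕ} (h : ∀ I ⊆ X, M.Indep I → I.ncard ≤ n) : mrank M X ≤ n := by
  refine csSup_le ⟨0, ∅, Set.empty_subset _, M.empty_indep, Set.ncard_empty _⟩ ?_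
  rintro k ⟨I, hIX, hI, rfl⟩
  exact h I hIX hI

end Rank

lemma sdiff_eq_inter_of_subset_union {B U V : Set α} (hB : B ⊆ U ∪ V) (hUV : Disjoint U V) :
    B \ U = B ∩ V := by
  ext x
  constructor
  · rintro ⟨hxB, hxU⟩
    exact ⟨hxB, (hB hxB).resolve_left hxU⟩
  · rintro ⟨hxB, hxV⟩
    exact ⟨hxB, fun hxU => hUV.ne_of_mem hxU hxV rfl⟩

section Transversal

variable {G : SimpleGraph α} {A B : Set α} {M : Matroid α}

lemma certifiesIndep_iff (hAB : Disjoint A B) {X : Set α} {m : Set (Sym2 α)}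
    (hX : (X ∩ A).Finite) :
    CertifiesIndep G A B X m ↔ IsSaturatingMatching G m (X ∩ A) (B \ X) := by
  have hST : Disjoint (X ∩ A) (B \ X) :=
    hAB.mono Set.inter_subset_right Set.sdiff_subset
  constructor
  · rintro ⟨hm, hfin, hcard, hjoins⟩
    exact ⟨hm, hfin, hjoins, (Joins.ncard_eq_iff_covers hjoins hm hST hX).mp hcard⟩
  · rintro ⟨hm, hfin, hjoins, hcov⟩
    exact ⟨hm, hfin, (Joins.ncard_eq_iff_covers hjoins hm hST hX).mpr hcov, hjoins⟩

variable (hAB : Disjoint A B) (hfin : (A ∪ B).Finite)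
  (hM : ∀ X ⊆ A ∪ B, M.Indep X ↔ ∃ m, IsSaturatingMatching G m (X ∩ A) (B \ X))
include hAB hfin hM

lemma mrank_le_ncard (hE : M.E = A ∪ B) : mrank M M.E ≤ B.ncard := by
  refine mrank_le fun I hIE hI => ?_
  rw [hE] at hIE
  obtain ⟨m, hm⟩ := (hM I hIE).mp hI
  have hBfin : B.Finite := hfin.subset Set.subset_union_right
  have hST : Disjoint (I ∩ A) (B \ I) := hAB.mono Set.inter_subset_right Set.sdiff_subset
  have hcard : (I ∩ A).ncard ≤ (B \ I).ncard := by
    rw [← hm.ncard_eq hST ((hfin.subset hIE).inter_of_left _)]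
    exact hm.joins.symm.ncard_le hm.isGraphMatching hST.symm hBfin.sdiff
  have hI := Set.ncard_inter_add_ncard_sdiff_eq_ncard I A (hfin.subset hIE)
  have hB := Set.ncard_inter_add_ncard_sdiff_eq_ncard B I hBfin
  rw [sdiff_eq_inter_of_subset_union hIE hAB] at hI
  rw [Set.inter_comm B I] at hB
  omega

lemma ncard_add_ncard_le_mrank (hE : M.E = A ∪ B) {U : Set α} (hU : U ⊆ A ∪ B)
    {N : Set (Sym2 α)} (hN : IsGraphMatching G N) (hNj : Joins N (A ∩ U) (B \ U)) :
    (B ∩ U).ncard + N.ncard ≤ mrank M U := by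
  set Y := {a ∈ A ∩ U | ∃ e ∈ N, a ∈ e}
  have hST : Disjoint (A ∩ U) (B \ U) := hAB.mono Set.inter_subset_left Set.sdiff_subset
  have hYA : (B ∩ U ∪ Y) ∩ A = Y := by
    ext x
    constructor
    · rintro ⟨hx | hx, hxA⟩
      exacts [absurd rfl (hAB.ne_of_mem hxA hx.1), hx]
    · intro hx
      exact ⟨Or.inr hx, hx.1.1⟩
  have hsat : IsSaturatingMatching G N ((B ∩ U ∪ Y) ∩ A) (B \ (B ∩ U ∪ Y)) := by
    rw [hYA]
    refine ⟨hN, hNj.finite (hfin.subset fun x hx => Or.inl hx.1)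
      (hfin.subset fun x hx => Or.inr hx.1), ?_, fun a ha => ha.2⟩
    intro e he
    obtain ⟨a, b, ha, hb, rfl⟩ := hNj e he
    exact ⟨a, b, ⟨ha, _, he, Sym2.mem_mk_left _ _⟩,
      ⟨hb.1, fun hbI => hb.2 (hbI.elim (·.2) (·.1.2))⟩, rfl⟩
  have hIU : B ∩ U ∪ Y ⊆ U := Set.union_subset Set.inter_subset_right fun x hx => hx.1.2
  have hindep : M.Indep (B ∩ U ∪ Y) := (hM _ (hIU.trans hU)).mpr ⟨N, hsat⟩
  calc (B ∩ U).ncard + N.ncard = (B ∩ U ∪ Y).ncard := by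
        rw [hNj.ncard_eq hN hST, Set.ncard_union_eq
          (Set.disjoint_left.mpr fun x hxB hxY => hAB.ne_of_mem hxY.1.1 hxB.1 rfl)
          (hfin.subset fun x hx => Or.inr hx.1) (hfin.subset fun x hx => Or.inl hx.1.1)]
    _ ≤ mrank M U := le_mrank (hE ▸ hfin) hIU hindep

lemma ncard_add_ncard_le_connVal (hE : M.E = A ∪ B) {U V : Set α} (hUV : U ∪ V = A ∪ B)
    (hdisj : Disjoint U V) {N₁ N₂ : Set (Sym2 α)}
    (hN₁ : IsGraphMatching G N₁) (hN₁j : Joins N₁ (A ∩ U) (B ∩ V))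
    (hN₂ : IsGraphMatching G N₂) (hN₂j : Joins N₂ (A ∩ V) (B ∩ U)) :
    N₁.ncard + N₂.ncard ≤ connVal M U := by
  have hEU : M.E \ U = V := by
    rw [hE, ← hUV, Set.union_sdiff_left, hdisj.symm.sdiff_eq_left]
  have hB : B ⊆ U ∪ V := hUV ▸ Set.subset_union_right
  have hBV : B \ U = B ∩ V := sdiff_eq_inter_of_subset_union hB hdisj
  have hBU : B \ V = B ∩ U :=
    sdiff_eq_inter_of_subset_union (Set.union_comm U V ▸ hB) hdisj.symm
  have hrU := ncard_add_ncard_le_mrank hAB hfin hM hE (hUV ▸ Set.subset_union_left) hN₁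
    (hBV ▸ hN₁j)
  have hrV := ncard_add_ncard_le_mrank hAB hfin hM hE (hUV ▸ Set.subset_union_right) hN₂
    (hBU ▸ hN₂j)
  have hrE := mrank_le_ncard hAB hfin hM hE
  have hBcard := Set.ncard_inter_add_ncard_sdiff_eq_ncard B U (hfin.subset Set.subset_union_right)
  rw [hBV] at hBcard
  have hconn : connVal M U = mrank M U + mrank M V - mrank M M.E := by rw [connVal, hEU]
  omega

lemma exists_coversEdges_ncard_le (hE : M.E = A ∪ B) {U V : Set α} (hUV : U ∪ V = A ∪ B)
    (hdisj : Disjoint U V) :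
    ∃ C : Set α, C.Finite ∧ C.ncard ≤ 2 * connVal M U ∧
      CoversEdges G (A ∩ U) (B ∩ V) C ∧ CoversEdges G (A ∩ V) (B ∩ U) C := by
  have hST₁ : Disjoint (A ∩ U) (B ∩ V) := hAB.mono Set.inter_subset_left Set.inter_subset_left
  have hST₂ : Disjoint (A ∩ V) (B ∩ U) := hAB.mono Set.inter_subset_left Set.inter_subset_left
  have hAB₁ : A ∩ U ∪ B ∩ V ⊆ A ∪ B :=
    Set.union_subset_union Set.inter_subset_left Set.inter_subset_left
  have hAB₂ : A ∩ V ∪ B ∩ U ⊆ A ∪ B :=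
    Set.union_subset_union Set.inter_subset_left Set.inter_subset_left
  have hS₁ := hfin.subset (Set.subset_union_left.trans hAB₁)
  have hS₂ := hfin.subset (Set.subset_union_left.trans hAB₂)
  obtain ⟨N₁, hN₁⟩ := exists_isMaximumMatching G hST₁ hS₁
  obtain ⟨N₂, hN₂⟩ := exists_isMaximumMatching G hST₂ hS₂
  have hN₁fin := hN₁.joins.finite hS₁ (hfin.subset (Set.subset_union_right.trans hAB₁))
  have hN₂fin := hN₂.joins.finite hS₂ (hfin.subset (Set.subset_union_right.trans hAB₂))
  refine ⟨verts N₁ ∪ verts N₂, hfin.subset (Set.union_subset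
      (hN₁.joins.verts_subset.trans hAB₁) (hN₂.joins.verts_subset.trans hAB₂)), ?_,
    (hN₁.coversEdges_verts hN₁fin).mono Set.subset_union_left,
    (hN₂.coversEdges_verts hN₂fin).mono Set.subset_union_right⟩
  calc (verts N₁ ∪ verts N₂).ncard ≤ (verts N₁).ncard + (verts N₂).ncard := Set.ncard_union_le _ _
    _ ≤ 2 * N₁.ncard + 2 * N₂.ncard := add_le_add
        (hN₁.joins.ncard_verts_le hN₁.isGraphMatching hST₁)
        (hN₂.joins.ncard_verts_le hN₂.isGraphMatching hST₂)
    _ ≤ 2 * connVal M U := by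
        have := ncard_add_ncard_le_connVal hAB hfin hM hE hUV hdisj hN₁.isGraphMatching
          hN₁.joins hN₂.isGraphMatching hN₂.joins
        omega

end Transversal

section Gluing

variable {G : SimpleGraph α} {A B U V X Z W : Set α}

def sideSources (A U V X W : Set α) : Set α := (X ∩ A ∩ U) \ W ∪ W ∩ A ∩ V

def sideTargets (B U V X W : Set α) : Set α := (B ∩ U) \ (X ∪ W) ∪ W ∩ B ∩ V

/-- The `U`-half of a certificate for `X ∪ Z` with interface `W`. It uses only the vertices of
`U ∖ W` and of `W ∩ V`; the `V`-half uses those of `V ∖ W` and of `W ∩ U`, so halves glue. -/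
def SideCert (G : SimpleGraph α) (A B U V X W : Set α) : Prop :=
  W ∩ A ∩ U ⊆ X ∧ Disjoint (W ∩ B ∩ U) X ∧
    ∃ m, IsSaturatingMatching G m (sideSources A U V X W) (sideTargets B U V X W)

lemma SideCert.union (hUV : Disjoint U V) (hX : X ⊆ U) (hZ : Z ⊆ V)
    (hXW : SideCert G A B U V X W) (hZW : SideCert G A B V U Z W) :
    ∃ m, IsSaturatingMatching G m ((X ∪ Z) ∩ A) (B \ (X ∪ Z)) := by
  obtain ⟨hWAU, hWBU, m₁, hm₁⟩ := hXW
  obtain ⟨hWAV, hWBV, m₂, hm₂⟩ := hZW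
  have hU := Set.disjoint_left.mp hUV
  have hBU := Set.disjoint_left.mp hWBU
  have hBV := Set.disjoint_left.mp hWBV
  refine ⟨m₁ ∪ m₂, ?_⟩
  have hsat := (hm₁.union hm₂ ?_).mono_right (T' := B \ (X ∪ Z)) ?_
  · convert hsat using 1
    refine Set.Subset.antisymm ?_ ?_
    · rintro x ⟨hx | hx, hxA⟩ <;> by_cases hxW : x ∈ W
      · exact Or.inr (Or.inr ⟨⟨hxW, hxA⟩, hX hx⟩)
      · exact Or.inl (Or.inl ⟨⟨⟨hx, hxA⟩, hX hx⟩, hxW⟩)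
      · exact Or.inl (Or.inr ⟨⟨hxW, hxA⟩, hZ hx⟩)
      · exact Or.inr (Or.inl ⟨⟨⟨hx, hxA⟩, hZ hx⟩, hxW⟩)
    · rintro x ((⟨⟨⟨hx, hxA⟩, -⟩, -⟩ | hx) | (⟨⟨⟨hx, hxA⟩, -⟩, -⟩ | hx))
      exacts [⟨Or.inl hx, hxA⟩, ⟨Or.inr (hWAV hx), hx.1.2⟩, ⟨Or.inr hx, hxA⟩,
        ⟨Or.inl (hWAU hx), hx.1.2⟩]
  · have hside : ∀ {U V X : Set α}, sideSources A U V X W ∪ sideTargets B U V X W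
        ⊆ U \ W ∪ W ∩ V := by
      intro U V X x
      simp only [sideSources, sideTargets, Set.mem_inter_iff, Set.mem_union, Set.mem_sdiff]
      tauto
    refine Disjoint.mono hside hside (Set.disjoint_left.mpr fun x hx₁ hx₂ => ?_)
    have := @hU x
    simp only [Set.mem_inter_iff, Set.mem_union, Set.mem_sdiff] at *
    tauto
  · rintro x ((⟨⟨hB, hxU⟩, hx⟩ | hx) | (⟨⟨hB, hxV⟩, hx⟩ | hx))
    · exact ⟨hB, fun h => h.elim (fun h => hx (Or.inl h)) fun h => hU hxU (hZ h)⟩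
    · exact ⟨hx.1.2, fun h => h.elim (fun h => hU (hX h) hx.2) (hBV hx)⟩
    · exact ⟨hB, fun h => h.elim (fun h => hU (hX h) hxV) fun h => hx (Or.inl h)⟩
    · exact ⟨hx.1.2, fun h => h.elim (hBU hx) fun h => hU hx.2 (hZ h)⟩

end Gluing

section Splitting

variable {G : SimpleGraph α} {A B C U V X Z : Set α} {m : Set (Sym2 α)}

def interface (m : Set (Sym2 α)) (A B C U V : Set α) : Set α :=
  {a ∈ C ∩ A | ∃ b, s(a, b) ∈ m ∧ (a ∈ U ∧ b ∈ V ∨ a ∈ V ∧ b ∈ U)} ∪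
    {b ∈ C ∩ B | ∃ a ∉ C, s(a, b) ∈ m ∧ (a ∈ U ∧ b ∈ V ∨ a ∈ V ∧ b ∈ U)}

lemma interface_comm : interface m A B C U V = interface m A B C V U := by
  simp only [interface, or_comm]

lemma interface_subset : interface m A B C U V ⊆ C := by
  rintro x (hx | hx)
  exacts [hx.1.1, hx.1.1]

lemma exists_of_mem_interface_of_mem_left (hAB : Disjoint A B) {x : α}
    (hx : x ∈ interface m A B C U V) (hxA : x ∈ A) :
    x ∈ C ∧ ∃ b, s(x, b) ∈ m ∧ (x ∈ U ∧ b ∈ V ∨ x ∈ V ∧ b ∈ U) := by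
  rcases hx with ⟨⟨hxC, -⟩, hx⟩ | ⟨⟨-, hxB⟩, -⟩
  exacts [⟨hxC, hx⟩, absurd rfl (hAB.ne_of_mem hxA hxB)]

lemma exists_of_mem_interface_of_mem_right (hAB : Disjoint A B) {x : α}
    (hx : x ∈ interface m A B C U V) (hxB : x ∈ B) :
    ∃ a ∉ C, s(a, x) ∈ m ∧ (a ∈ U ∧ x ∈ V ∨ a ∈ V ∧ x ∈ U) := by
  rcases hx with ⟨⟨-, hxA⟩, -⟩ | ⟨-, hx⟩
  exacts [absurd rfl (hAB.ne_of_mem hxA hxB), hx]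

variable (hAB : Disjoint A B) (hUV : Disjoint U V) (hcover : A ∪ B ⊆ U ∪ V)
  (hm : IsSaturatingMatching G m ((X ∪ Z) ∩ A) (B \ (X ∪ Z)))
  (hC : CoversEdges G (A ∩ U) (B ∩ V) C)
include hAB hUV hcover hm hC

lemma mem_sideTargets_of_mem_sideSources {a b : α} (he : s(a, b) ∈ m) (hb : b ∈ B \ (X ∪ Z))
    (ha : a ∈ sideSources A U V X (interface m A B C U V)) :
    b ∈ sideTargets B U V X (interface m A B C U V) := by
  set W := interface m A B C U V
  have hU := Set.disjoint_left.mp hUV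
  have hbW : ∀ a' ∈ C, s(a', b) ∈ m → b ∉ W := by
    intro a' ha'C he' hbW
    obtain ⟨a'', ha''C, he'', -⟩ := exists_of_mem_interface_of_mem_right hAB hbW hb.1
    exact ha''C (hm.isGraphMatching.left_unique he' he'' ▸ ha'C)
  rcases ha with ⟨⟨⟨-, haA⟩, haU⟩, haW⟩ | ⟨⟨haW, haA⟩, haV⟩
  · rcases hcover (Or.inr hb.1) with hbU | hbV
    · refine Or.inl ⟨⟨hb.1, hbU⟩, fun h => h.elim (fun h => hb.2 (Or.inl h)) fun hbW' => ?_⟩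
      obtain ⟨a', -, he', hcross⟩ := exists_of_mem_interface_of_mem_right hAB hbW' hb.1
      rw [← hm.isGraphMatching.left_unique he he'] at hcross
      exact hcross.elim (fun h => hU hbU h.2) fun h => hU haU h.1
    · have haC : a ∉ C := fun haC => haW (Or.inl ⟨⟨haC, haA⟩, b, he, Or.inl ⟨haU, hbV⟩⟩)
      have hbC := (hC a b (hm.isGraphMatching.1 he) ⟨haA, haU⟩ ⟨hb.1, hbV⟩).resolve_left haC
      exact Or.inr ⟨⟨Or.inr ⟨⟨hbC, hb.1⟩, a, haC, he, Or.inl ⟨haU, hbV⟩⟩, hb.1⟩, hbV⟩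
  · obtain ⟨haC, b', he', hcross⟩ := exists_of_mem_interface_of_mem_left hAB haW haA
    rw [← hm.isGraphMatching.right_unique he he'] at hcross
    have hbU : b ∈ U := hcross.elim (fun h => absurd h.1 (fun h => hU h haV)) And.right
    exact Or.inl ⟨⟨hb.1, hbU⟩, fun h => h.elim (fun h => hb.2 (Or.inl h)) (hbW a haC he)⟩

lemma sideCert_interface (hZ : Z ⊆ V) : SideCert G A B U V X (interface m A B C U V) := by
  set W := interface m A B C U V
  have hWA : ∀ x ∈ W, x ∈ A → x ∈ X ∪ Z := by
    intro x hxW hxA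
    obtain ⟨-, b, he, -⟩ := exists_of_mem_interface_of_mem_left hAB hxW hxA
    exact (hm.joins.mem_of_mk_mem he fun h => hAB.ne_of_mem hxA h.1 rfl).1.1
  have hsrc : ∀ a ∈ sideSources A U V X W, a ∈ (X ∪ Z) ∩ A := by
    rintro a (⟨⟨⟨haX, haA⟩, -⟩, -⟩ | ⟨⟨haW, haA⟩, -⟩)
    exacts [⟨Or.inl haX, haA⟩, ⟨hWA a haW haA, haA⟩]
  refine ⟨fun x ⟨⟨hxW, hxA⟩, hxU⟩ => ?_, Set.disjoint_left.mpr fun x ⟨⟨hxW, hxB⟩, _⟩ hxX => ?_,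
    {e ∈ m | ∃ a ∈ sideSources A U V X W, a ∈ e},
    ⟨hm.isGraphMatching.mono (Set.sep_subset _ _), hm.finite.subset (Set.sep_subset _ _),
      fun e ⟨he, a, ha, hae⟩ => ?_, fun a ha => ?_⟩⟩
  · exact (hWA x hxW hxA).resolve_right fun hxZ => hUV.ne_of_mem hxU (hZ hxZ) rfl
  · obtain ⟨a, -, he, -⟩ := exists_of_mem_interface_of_mem_right hAB hxW hxB
    rw [Sym2.eq_swap] at he
    exact (hm.joins.symm.mem_of_mk_mem he fun h => hAB.ne_of_mem h.2 hxB rfl).1.2 (Or.inl hxX)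
  · obtain ⟨a', b, -, hb, rfl⟩ := hm.joins e he
    obtain rfl := eq_of_mem_sym2_of_disjoint hAB hb.1 hae (hsrc a ha).2
    exact ⟨a, b, ha, mem_sideTargets_of_mem_sideSources hAB hUV hcover hm hC he hb ha, rfl⟩
  · obtain ⟨e, he, hae⟩ := hm.covers a (hsrc a ha)
    exact ⟨e, ⟨he, a, ha, hae⟩, hae⟩

end Splitting

lemma indep_union_iff_exists_sideCert {G : SimpleGraph α} {A B C U V X Z : Set α}
    {M : Matroid α} (hAB : Disjoint A B)
    (hM : ∀ X ⊆ A ∪ B, M.Indep X ↔ ∃ m, IsSaturatingMatching G m (X ∩ A) (B \ X))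
    (hUV : U ∪ V = A ∪ B) (hdisj : Disjoint U V)
    (hC₁ : CoversEdges G (A ∩ U) (B ∩ V) C) (hC₂ : CoversEdges G (A ∩ V) (B ∩ U) C)
    (hX : X ⊆ U) (hZ : Z ⊆ V) :
    M.Indep (X ∪ Z) ↔ ∃ W ⊆ C, SideCert G A B U V X W ∧ SideCert G A B V U Z W := by
  rw [hM _ (hUV ▸ Set.union_subset_union hX hZ)]
  constructor
  · rintro ⟨m, hm⟩
    refine ⟨interface m A B C U V, interface_subset,
      sideCert_interface hAB hdisj hUV.symm.subset hm hC₁ hZ, ?_⟩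
    rw [interface_comm]
    rw [Set.union_comm] at hm
    exact sideCert_interface hAB hdisj.symm (Set.union_comm U V ▸ hUV.symm.subset) hm hC₂ hX
  · rintro ⟨W, -, hXW, hZW⟩
    exact hXW.union hdisj hX hZ hZW

lemma SimClassesLE.mono {M : Matroid α} {U : Set α} {k k' : ℕ} (h : SimClassesLE M U k)
    (hk : k ≤ k') : SimClassesLE M U k' :=
  let ⟨f, hf⟩ := h
  ⟨Fin.castLE hk ∘ f, fun X X' hX hX' hXX' => hf X X' hX hX' (Fin.castLE_injective hk hXX')⟩

lemma simClassesLE_of_forall_subset_iff {M : Matroid α} {U C : Set α} (hC : C.Finite)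
    (P : Set α → Set α → Prop)
    (hP : ∀ X X', X ⊆ U → X' ⊆ U → (∀ W ⊆ C, P X W ↔ P X' W) → Sim M U X X') :
    SimClassesLE M U (2 ^ 2 ^ C.ncard) := by
  have := hC.fintype
  have hcard : Fintype.card (Set (Set C)) = 2 ^ 2 ^ C.ncard := by
    rw [Fintype.card_set, Fintype.card_set, ← Nat.card_eq_fintype_card, Nat.card_coe_set_eq]
  let e := Fintype.equivFinOfCardEq hcard
  refine ⟨fun X => e {w | P X (Subtype.val '' w)}, fun X X' hX hX' hXX' => hP X X' hX hX' ?_⟩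
  intro W hW
  have hw := congrArg (Subtype.val ⁻¹' W ∈ ·) (e.injective hXX')
  simp only [Set.mem_ofPred_eq, Subtype.image_preimage_coe,
    Set.inter_eq_self_of_subset_right hW] at hw
  exact Iff.of_eq hw

lemma two_mul_le_two_pow (n : ℕ) : 2 * n ≤ 2 ^ n := by
  rcases n with _ | n
  · simp
  · rw [pow_succ]
    have := Nat.lt_two_pow_self (n := n)
    omega

end

theorem fundamental_transversal_sim_classes_general {α : Type*} (G : SimpleGraph α) (A B : Set α)
    (hfin : (A ∪ B).Finite) (hAB : Disjoint A B)
    (M : Matroid α) (hE : M.E = A ∪ B)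
    (hInd : ∀ X ⊆ A ∪ B, (M.Indep X ↔ ∃ m, CertifiesIndep G A B X m))
    (l : ℕ) (U V : Set α)
    (hUV : U ∪ V = A ∪ B) (hdisj : Disjoint U V)
    (hconn : connVal M U ≤ l) :
    SimClassesLE M U (2 ^ 2 ^ 2 ^ l + 1) := by
  have hM : ∀ X ⊆ A ∪ B, M.Indep X ↔ ∃ m, IsSaturatingMatching G m (X ∩ A) (B \ X) :=
    fun X hX => (hInd X hX).trans <| exists_congr fun m =>
      certifiesIndep_iff hAB (hfin.subset (Set.inter_subset_left.trans hX))
  obtain ⟨C, hCfin, hCcard, hC₁, hC₂⟩ := exists_coversEdges_ncard_le hAB hfin hM hE hUV hdisj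
  have hEU : M.E \ U = V := by
    rw [hE, ← hUV, Set.union_sdiff_left, hdisj.symm.sdiff_eq_left]
  refine (simClassesLE_of_forall_subset_iff hCfin (SideCert G A B U V)
    fun X X' hX hX' hXX' Z hZ => ?_).mono ?_
  · rw [hEU] at hZ
    rw [indep_union_iff_exists_sideCert hAB hM hUV hdisj hC₁ hC₂ hX hZ,
      indep_union_iff_exists_sideCert hAB hM hUV hdisj hC₁ hC₂ hX' hZ]
    exact exists_congr fun W => and_congr_right fun hW => and_congr_left' (hXX' W hW)
  · have hC : C.ncard ≤ 2 ^ l :=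
      hCcard.trans ((Nat.mul_le_mul_left 2 hconn).trans (two_mul_le_two_pow l))
    exact Nat.le_succ_of_le (Nat.pow_le_pow_right two_pos (Nat.pow_le_pow_right two_pos hC))

/-- for the fundamental transversal matroid of a finite bipartite graph,
if λ_{M[G]}(U) ≤ λ then ∼_U has at most 2^(2^(2^λ)) + 1 classes. -/
theorem fundamental_transversal_sim_classes {α : Type*} (G : SimpleGraph α) (A B : Set α)
    (hfin : (A ∪ B).Finite) (hAB : Disjoint A B)
    (hbip : ∀ x y, G.Adj x y → (x ∈ A ∧ y ∈ B) ∨ (x ∈ B ∧ y ∈ A))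
    (M : Matroid α) (hE : M.E = A ∪ B)
    (hInd : ∀ X ⊆ A ∪ B, (M.Indep X ↔ ∃ m, CertifiesIndep G A B X m))
    (l : ℕ) (hl : 0 < l) (U V : Set α)
    (hUV : U ∪ V = A ∪ B) (hdisj : Disjoint U V)
    (hconn : connVal M U ≤ l) :
    SimClassesLE M U (2 ^ 2 ^ 2 ^ l + 1) :=
  fundamental_transversal_sim_classes_general G A B hfin hAB M hE hInd l U V hUV hdisj hconn
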